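/- For every Q ∈ Sp(2), the following trace identity holds, expressing that the Laplacian of F with respect to the left-invariant metric equals −7F: Σ_{η ∈ B} Re( ( Q · ( η·η − D(η, η) ) )₀₀ ) = −7·Re(Q₀₀), where B is the following orthonormal basis of sp(2) consisting of 10 matrices: [[u, 0], [0, 0]] for u ∈ {i, j, k}; [[0, 0], [0, u]] for u ∈ {i, j, k}; and [[0, v], [−v̄, 0]] for v ∈ {1, i, j, k}; and for η = [[x, y], [−ȳ, z]], D(η, η) := [[0, yz − xy], [−conj(yz − xy), 0]]. -/

import Mathlib

noncomputable section
open Matrix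

/-- The real quaternions. -/
abbrev H : Type := Quaternion ℝ

/-- The quaternion unit `i`. -/
def qi : H := ⟨0, 1, 0, 0⟩
/-- The quaternion unit `j`. -/
def qj : H := ⟨0, 0, 1, 0⟩
/-- The quaternion unit `k`. -/
def qk : H := ⟨0, 0, 0, 1⟩

/-- `Sp(2)`, the quaternionic unitary group `{Q | Q Qᴴ = 1}`. -/
def Sp2 : Set (Matrix (Fin 2) (Fin 2) H) := {Q | Q * Qᴴ = 1}

/-- For `η = [[x, y], [−ȳ, z]]`, `D(η, η) = [[0, yz − xy], [−conj(yz − xy), 0]]`. -/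
def Ddiag (η : Matrix (Fin 2) (Fin 2) H) : Matrix (Fin 2) (Fin 2) H :=
  !![0, η 0 1 * η 1 1 - η 0 0 * η 0 1;
     -star (η 0 1 * η 1 1 - η 0 0 * η 0 1), 0]

/-- The orthonormal basis of `sp(2)` consisting of the 10 matrices
`[[u,0],[0,0]]`, `[[0,0],[0,u]]` for `u ∈ {i,j,k}` and `[[0,v],[−v̄,0]]`
for `v ∈ {1,i,j,k}`. -/
def sp2Basis : List (Matrix (Fin 2) (Fin 2) H) :=
  [!![qi, 0; 0, 0], !![qj, 0; 0, 0], !![qk, 0; 0, 0],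
   !![0, 0; 0, qi], !![0, 0; 0, qj], !![0, 0; 0, qk],
   !![0, 1; -1, 0], !![0, qi; qi, 0], !![0, qj; qj, 0], !![0, qk; qk, 0]]

/-- The Laplacian of `F(Q) = Re Q₀₀` with respect to the
left-invariant metric on `Sp(2)` equals `−7F`: summing the Hessian
`H_F(η,η) = Re((Q·(η² − D(η,η)))₀₀)` over the orthonormal basis of `sp(2)`
gives `−7·Re Q₀₀`. -/
theorem laplacian_of_F (Q : Matrix (Fin 2) (Fin 2) H) (hQ : Q ∈ Sp2) :
    (sp2Basis.map fun η => ((Q * (η * η - Ddiag η)) 0 0).re).sum =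
      -7 * (Q 0 0).re := by
  simp only [sp2Basis, Ddiag, List.map_cons, List.map_nil, List.sum_cons,
    List.sum_nil, Matrix.mul_apply, Fin.sum_univ_two, Matrix.sub_apply,
    Matrix.cons_val', Matrix.cons_val_zero, Matrix.cons_val_one, Matrix.head_cons,
    Matrix.head_fin_const, Matrix.empty_val', Matrix.cons_val_fin_one]
  generalize Q 0 0 = a; generalize Q 0 1 = b
  simp only [Quaternion.re_mul, Quaternion.imI_mul, Quaternion.imJ_mul, Quaternion.imK_mul,
    Quaternion.re_sub, Quaternion.re_add, Quaternion.imI_sub, Quaternion.imJ_sub, Quaternion.imK_sub,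
    Quaternion.imI_add, Quaternion.imJ_add, Quaternion.imK_add, Quaternion.re_neg, Quaternion.imI_neg,
    Quaternion.imJ_neg, Quaternion.imK_neg, Quaternion.re_star, Quaternion.imI_star,
    Quaternion.imJ_star, Quaternion.imK_star]
  simp [qi, qj, qk, Quaternion.re_zero, Quaternion.imI_zero, Quaternion.imJ_zero, Quaternion.imK_zero,
    Quaternion.re_one, Quaternion.imI_one, Quaternion.imJ_one, Quaternion.imK_one]
  ring
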